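/- arXiv:1905.00227 — 4 statements merged into one kernel-verified Lean document; each statement's English description precedes it below -/
import Mathlib

section
/- Let R be a Cohen–Macaulay ring, and let I and G be ideals of R such that the height of G is strictly greater than the height of I, and I is generated by s elements where s equals the height of I. Then I is saturated with respect to G, i.e., the saturation (I : G^∞) equals I. -/
open RingTheory.Sequence Submodule

section Davis
variable {R : Type*} [CommRing R]

/-- Davis' prime avoidance for cosets. -/
lemma davis_avoid : ∀ (s : Finset (Ideal R)), (∀ P ∈ s, P.IsPrime) → ∀ (a : R) (J : Ideal R),
    (∀ P ∈ s, ¬ (Ideal.span {a} ⊔ J ≤ P)) → ∃ j ∈ J, ∀ P ∈ s, a + j ∉ P := by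
  intro s
  induction s using Finset.strongInduction with
  | _ s ih =>
    intro hs a J h
    classical
    by_cases hcont : ∃ P ∈ s, ∃ Q ∈ s, P ≠ Q ∧ P ≤ Q
    · obtain ⟨P, hP, Q, hQ, hne, hle⟩ := hcont
      obtain ⟨j, hj, hav⟩ := ih (s.erase P) (Finset.erase_ssubset hP)
        (fun P' h' => hs _ (Finset.mem_of_mem_erase h')) a J
        (fun P' h' => h _ (Finset.mem_of_mem_erase h'))
      refine ⟨j, hj, fun P' hP' => ?_⟩
      by_cases hPP : P' = P
      · subst hPP
        exact fun hmem => hav Q (Finset.mem_erase.mpr ⟨hne.symm, hQ⟩) (hle hmem)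
      · exact hav P' (Finset.mem_erase.mpr ⟨hPP, hP'⟩)
    · push_neg at hcont
      rcases s.eq_empty_or_nonempty with rfl | ⟨P, hP⟩
      · exact ⟨0, J.zero_mem, by simp⟩
      obtain ⟨j, hj, hav⟩ := ih (s.erase P) (Finset.erase_ssubset hP)
        (fun P' h' => hs _ (Finset.mem_of_mem_erase h')) a J
        (fun P' h' => h _ (Finset.mem_of_mem_erase h'))
      by_cases hmem : a + j ∈ P
      · -- fix up by adding t * u
        have hJP : ¬ J ≤ P := by
          intro hJP
          refine h P hP (sup_le ((Ideal.span_singleton_le_iff_mem P).mpr ?_) hJP)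
          have : a = (a + j) - j := by ring
          rw [this]
          exact P.sub_mem hmem (hJP hj)
        obtain ⟨t, htJ, htP⟩ := SetLike.not_le_iff_exists.mp hJP
        have hprod : ¬ ((s.erase P).prod id ≤ P) := by
          intro hle'
          obtain ⟨Q, hQ, hQP⟩ := ((hs P hP).prod_le).mp hle'
          exact hcont Q (Finset.mem_of_mem_erase hQ) P hP (Finset.mem_erase.mp hQ).1 hQP
        obtain ⟨u, huprod, huP⟩ := SetLike.not_le_iff_exists.mp hprod
        refine ⟨j + t * u, J.add_mem hj (J.mul_mem_right _ htJ), fun Q hQ => ?_⟩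
        by_cases hQP : Q = P
        · subst hQP
          intro hmem2
          have : t * u ∈ Q := by
            have : t * u = (a + (j + t * u)) - (a + j) := by ring
            rw [this]; exact Q.sub_mem hmem2 hmem
          rcases (hs Q hQ).mem_or_mem this with h1 | h1
          exacts [htP h1, huP h1]
        · intro hmem2
          have htu : t * u ∈ Q := by
            have : u ∈ Q := by
              have : (s.erase P).prod id ≤ Q := by
                calc (s.erase P).prod id ≤ (s.erase P).inf id := Ideal.prod_le_inf
                _ ≤ Q := Finset.inf_le (Finset.mem_erase.mpr ⟨hQP, hQ⟩)
              exact this huprod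
            exact Q.mul_mem_left _ this
          have : a + j ∈ Q := by
            have : a + j = (a + (j + t * u)) - t * u := by ring
            rw [this]; exact Q.sub_mem hmem2 htu
          exact hav Q (Finset.mem_erase.mpr ⟨hQP, hQ⟩) this
      · exact ⟨j, hj, fun Q hQ => if hQP : Q = P then hQP ▸ hmem else
          hav Q (Finset.mem_erase.mpr ⟨hQP, hQ⟩)⟩
end Davis

section RegM
variable {R : Type*} [CommRing R] {M : Type*} [AddCommGroup M] [Module R M]

/-- `r` is regular on `M ⧸ N`, phrased elementwise in `M`. -/
def RegM (N : Submodule R M) (r : R) : Prop := ∀ x : M, r • x ∈ N → x ∈ N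

lemma regM_iff_isSMulRegular {N : Submodule R M} {r : R} :
    RegM N r ↔ IsSMulRegular (M ⧸ N) r := by
  constructor
  · intro h x y hxy
    obtain ⟨x, rfl⟩ := Submodule.Quotient.mk_surjective N x
    obtain ⟨y, rfl⟩ := Submodule.Quotient.mk_surjective N y
    change r • Submodule.Quotient.mk x = r • Submodule.Quotient.mk y at hxy
    rw [← Submodule.Quotient.mk_smul, ← Submodule.Quotient.mk_smul, Submodule.Quotient.eq] at hxy
    rw [Submodule.Quotient.eq]
    exact h _ (by rwa [smul_sub])
  · intro h x hx
    have hkey : r • (Submodule.Quotient.mk x : M ⧸ N) = r • (0 : M ⧸ N) := by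
      rw [smul_zero, ← Submodule.Quotient.mk_smul, Submodule.Quotient.mk_eq_zero]
      exact hx
    have := h hkey
    exact (Submodule.Quotient.mk_eq_zero N).mp this

lemma not_regM_iff {N : Submodule R M} {r : R} :
    ¬ RegM N r ↔ ∃ x : M, x ∉ N ∧ r • x ∈ N := by
  unfold RegM; push_neg; tauto

/-- Associated primes of the quotient `M ⧸ N`. -/
abbrev AssQ (N : Submodule R M) : Set (Ideal R) := associatedPrimes R (M ⧸ N)

lemma mem_assQ_isPrime {N : Submodule R M} {P : Ideal R} (h : P ∈ AssQ N) : P.IsPrime := h.1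

lemma exists_witness_of_assQ [IsNoetherianRing R] {N : Submodule R M} {P : Ideal R} (h : P ∈ AssQ N) :
    ∃ u : M, u ∉ N ∧ ∀ r ∈ P, r • u ∈ N := by
  obtain ⟨hp, x, hx⟩ := isAssociatedPrime_iff.mp h
  obtain ⟨u, rfl⟩ := N.mkQ_surjective x
  refine ⟨u, ?_, ?_⟩
  · intro hu
    apply hp.ne_top
    rw [hx, Ideal.eq_top_iff_one, Submodule.mem_colon_singleton, Submodule.mem_bot]
    have : (N.mkQ u : M ⧸ N) = 0 := (Submodule.Quotient.mk_eq_zero N).mpr hu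
    rw [this, smul_zero]
  · intro r hr
    rw [hx, Submodule.mem_colon_singleton, Submodule.mem_bot] at hr
    rw [← Submodule.Quotient.mk_eq_zero (p := N), Submodule.Quotient.mk_smul]
    exact hr

lemma not_regM_of_mem_assQ [IsNoetherianRing R] {N : Submodule R M} {P : Ideal R} (h : P ∈ AssQ N) {r : R}
    (hr : r ∈ P) : ¬ RegM N r := by
  obtain ⟨u, hu, hann⟩ := exists_witness_of_assQ h
  rw [not_regM_iff]
  exact ⟨u, hu, hann r hr⟩

lemma exists_assQ_of_not_regM [IsNoetherianRing R] {N : Submodule R M} {r : R}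
    (h : ¬ RegM N r) : ∃ P ∈ AssQ N, r ∈ P := by
  rw [not_regM_iff] at h
  obtain ⟨x, hx, hrx⟩ := h
  have hx0 : (Submodule.Quotient.mk x : M ⧸ N) ≠ 0 := by
    rwa [Ne, Submodule.Quotient.mk_eq_zero]
  obtain ⟨P, hP, hle⟩ := exists_le_isAssociatedPrime_of_isNoetherianRing R
    (Submodule.Quotient.mk x : M ⧸ N) hx0
  refine ⟨P, hP, hle ?_⟩
  rw [Submodule.mem_colon_singleton, Submodule.mem_bot, ← Submodule.Quotient.mk_smul,
    Submodule.Quotient.mk_eq_zero]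
  exact hrx

lemma assQ_witness [IsNoetherianRing R] {N : Submodule R M} {P : Ideal R} (h : P ∈ AssQ N) :
    ∃ u : M, u ∉ N ∧ ∀ r : R, r ∈ P ↔ r • u ∈ N := by
  obtain ⟨hp, x, hx⟩ := isAssociatedPrime_iff.mp h
  obtain ⟨u, rfl⟩ := Submodule.Quotient.mk_surjective N x
  have key : ∀ r : R, r ∈ P ↔ r • u ∈ N := by
    intro r
    rw [hx, Submodule.mem_colon_singleton, Submodule.mem_bot, ← Submodule.Quotient.mk_smul,
      Submodule.Quotient.mk_eq_zero]
  refine ⟨u, ?_, key⟩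
  intro hu
  exact hp.ne_top (Ideal.eq_top_iff_one _ |>.mpr ((key 1).mpr (by rwa [one_smul])))

lemma mem_assQ_of [IsNoetherianRing R] {N : Submodule R M} {P : Ideal R} (hP : P.IsPrime) (u : M)
    (hiff : ∀ r : R, r ∈ P ↔ r • u ∈ N) : P ∈ AssQ N := by
  refine isAssociatedPrime_iff.mpr ⟨hP, Submodule.Quotient.mk u, ?_⟩
  ext r
  rw [Submodule.mem_colon_singleton, Submodule.mem_bot, ← Submodule.Quotient.mk_smul,
    Submodule.Quotient.mk_eq_zero]
  exact hiff r

lemma assQ_finite [IsNoetherianRing R] [Module.Finite R M] (N : Submodule R M) :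
    (AssQ N).Finite := by
  have inst : IsNoetherian R M := inferInstance
  induction N using IsNoetherian.induction with
  | _ N ih =>
  by_cases hN : N = ⊤
  · subst hN
    have hss : Subsingleton (M ⧸ (⊤ : Submodule R M)) := Submodule.Quotient.subsingleton_iff.mpr rfl
    rw [show AssQ (⊤ : Submodule R M) = ∅ from associatedPrimes.eq_empty_of_subsingleton]
    exact Set.finite_empty
  · have hlt : N < ⊤ := lt_top_iff_ne_top.mpr hN
    have hnt : Nontrivial (M ⧸ N) := Submodule.Quotient.nontrivial_iff.mpr hN
    obtain ⟨Q, hQ⟩ := associatedPrimes.nonempty R (M ⧸ N)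
    obtain ⟨x, hxN, hxQ⟩ := assQ_witness hQ
    set N' : Submodule R M := N ⊔ Submodule.span R {x} with hN'def
    have hlt' : N < N' := by
      refine lt_of_le_of_ne le_sup_left ?_
      intro hEq
      exact hxN (hEq ▸ Submodule.mem_sup_right (Submodule.mem_span_singleton_self x))
    have hsub : AssQ N ⊆ insert Q (AssQ N') := by
      intro P hP
      obtain ⟨y, hyN, hyP⟩ := assQ_witness hP
      by_cases hA : ∃ r q : R, r ∉ P ∧ r • y - q • x ∈ N
      · left
        obtain ⟨r, q, hrP, hn⟩ := hA
        have hq : q ∉ Q := by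
          intro hq
          apply hrP
          rw [hyP]
          have : r • y = (r • y - q • x) + q • x := by abel
          rw [this]
          exact N.add_mem hn ((hxQ q).mp hq)
        ext t
        constructor
        · intro htP
          have h1 : (t * q) • x ∈ N := by
            have : (t * q) • x = r • (t • y) - t • (r • y - q • x) := by
              rw [smul_sub, smul_comm r t y, mul_smul]; abel
            rw [this]
            exact N.sub_mem (N.smul_mem r ((hyP t).mp htP)) (N.smul_mem t hn)
          have := (hxQ _).mpr h1
          rcases (mem_assQ_isPrime hQ).mem_or_mem this with h | h
          · exact h
          · exact absurd h hq
        · intro htQ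
          have h1 : (t * r) • y ∈ N := by
            have : (t * r) • y = q • (t • x) + t • (r • y - q • x) := by
              rw [smul_sub, smul_comm q t x, mul_smul]; abel
            rw [this]
            exact N.add_mem (N.smul_mem q ((hxQ t).mp htQ)) (N.smul_mem t hn)
          have := (hyP _).mpr h1
          rcases (mem_assQ_isPrime hP).mem_or_mem this with h | h
          · exact h
          · exact absurd h hrP
      · right
        push_neg at hA
        refine mem_assQ_of (mem_assQ_isPrime hP) y ?_
        intro t
        constructor
        · intro htP
          exact Submodule.mem_sup_left ((hyP t).mp htP)
        · intro htN'
          rw [Submodule.mem_sup] at htN'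
          obtain ⟨n, hn, w, hw, hEq⟩ := htN'
          obtain ⟨q, rfl⟩ := Submodule.mem_span_singleton.mp hw
          have hmem : t • y - q • x ∈ N := by
            have : t • y - q • x = n := by rw [← hEq]; abel
            rw [this]; exact hn
          by_contra htP
          exact hA t q htP hmem
    exact Set.Finite.subset (Set.Finite.insert Q (ih N' hlt')) hsub

lemma pick_reg [IsNoetherianRing R] [Module.Finite R M] (T : Finset (Submodule R M)) (a : R)
    (J : Ideal R) (h : ∀ N ∈ T, ∃ r ∈ Ideal.span {a} ⊔ J, RegM N r) :
    ∃ j ∈ J, (a + j ∈ Ideal.span {a} ⊔ J) ∧ ∀ N ∈ T, RegM N (a + j) := by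
  classical
  have hfin : (⋃ N ∈ T, AssQ N).Finite :=
    Set.Finite.biUnion T.finite_toSet (fun N _ => assQ_finite N)
  have hmem_iff : ∀ P : Ideal R, P ∈ hfin.toFinset ↔ ∃ N ∈ T, P ∈ AssQ N := by
    intro P
    rw [Set.Finite.mem_toFinset, Set.mem_iUnion₂]
    tauto
  have hs : ∀ P ∈ hfin.toFinset, P.IsPrime := by
    intro P hP
    obtain ⟨N, _, hPN⟩ := (hmem_iff P).mp hP
    exact mem_assQ_isPrime hPN
  have hav : ∀ P ∈ hfin.toFinset, ¬(Ideal.span {a} ⊔ J ≤ P) := by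
    intro P hP hle
    obtain ⟨N, hN, hPN⟩ := (hmem_iff P).mp hP
    obtain ⟨r, hr, hreg⟩ := h N hN
    exact not_regM_of_mem_assQ hPN (hle hr) hreg
  obtain ⟨j, hj, hav'⟩ := davis_avoid hfin.toFinset hs a J hav
  refine ⟨j, hj, ?_, fun N hN => ?_⟩
  · exact Submodule.add_mem _ (Submodule.mem_sup_left (Ideal.subset_span rfl)) (Submodule.mem_sup_right hj)
  by_contra hreg
  obtain ⟨P, hPN, hmem⟩ := exists_assQ_of_not_regM hreg
  exact hav' P ((hmem_iff P).mpr ⟨N, hN, hPN⟩) hmem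

end RegM

section Stages
variable {R : Type*} [CommRing R] {M : Type*} [AddCommGroup M] [Module R M]

lemma mem_span_smul_top {b : R} {x : M} :
    x ∈ Ideal.span {b} • (⊤ : Submodule R M) ↔ ∃ y : M, b • y = x := by
  constructor
  · intro h
    refine Submodule.smul_induction_on h ?_ ?_
    · intro r hr m _
      obtain ⟨c, rfl⟩ := Ideal.mem_span_singleton'.mp hr
      exact ⟨c • m, by rw [smul_comm, ← mul_smul]⟩
    · rintro x y ⟨x', rfl⟩ ⟨y', rfl⟩
      exact ⟨x' + y', by rw [smul_add]⟩
  · rintro ⟨y, rfl⟩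
    exact Submodule.smul_mem_smul (Ideal.mem_span_singleton_self b) trivial

/-- The stages condition: a weakly regular sequence on `M ⧸ N`, elementwise. -/
def Stages (N : Submodule R M) (cs : List R) : Prop :=
  ∀ i (h : i < cs.length), RegM (N ⊔ Ideal.ofList (cs.take i) • ⊤) cs[i]

lemma stage_nil (N : Submodule R M) : N ⊔ Ideal.ofList ([] : List R) • ⊤ = N := by
  rw [Ideal.ofList_nil]
  simp

lemma ofList_concat (l : List R) (x : R) :
    Ideal.ofList (l ++ [x]) = Ideal.ofList l ⊔ Ideal.span {x} := by
  rw [Ideal.ofList_append, Ideal.ofList_singleton]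

lemma stage_concat (N : Submodule R M) (l : List R) (x : R) :
    N ⊔ Ideal.ofList (l ++ [x]) • ⊤ = (N ⊔ Ideal.ofList l • ⊤) ⊔ Ideal.span {x} • ⊤ := by
  rw [ofList_concat, Submodule.sup_smul, sup_assoc]

lemma stage_cons (N : Submodule R M) (x : R) (l : List R) :
    N ⊔ Ideal.ofList (x :: l) • ⊤ = (N ⊔ Ideal.span {x} • ⊤) ⊔ Ideal.ofList l • ⊤ := by
  rw [Ideal.ofList_cons, Submodule.sup_smul, sup_assoc]

lemma stage_cons' (N : Submodule R M) (x : R) (l : List R) :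
    N ⊔ Ideal.ofList (x :: l) • ⊤ = (N ⊔ Ideal.ofList l • ⊤) ⊔ Ideal.span {x} • ⊤ := by
  rw [Ideal.ofList_cons, Submodule.sup_smul,
    sup_comm (Ideal.span {x} • (⊤ : Submodule R M)) (Ideal.ofList l • ⊤), ← sup_assoc, sup_assoc]

lemma regM_swap {K : Submodule R M} {x c : R} (hx : RegM K x)
    (hc : RegM (K ⊔ Ideal.span {x} • ⊤) c) : RegM (K ⊔ Ideal.span {c} • ⊤) x := by
  intro m hm
  rw [Submodule.mem_sup] at hm
  obtain ⟨k, hk, w, hw, hEq⟩ := hm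
  obtain ⟨v, rfl⟩ := mem_span_smul_top.mp hw
  have hcv : c • v ∈ K ⊔ Ideal.span {x} • ⊤ := by
    have : c • v = x • m - k := by rw [← hEq]; abel
    rw [this]
    exact Submodule.sub_mem _ (Submodule.mem_sup_right (mem_span_smul_top.mpr ⟨m, rfl⟩))
      (Submodule.mem_sup_left hk)
  have hv := hc v hcv
  rw [Submodule.mem_sup] at hv
  obtain ⟨k', hk', w', hw', hEq'⟩ := hv
  obtain ⟨m₂, rfl⟩ := mem_span_smul_top.mp hw'
  have hxm : x • (m - c • m₂) ∈ K := by
    have : x • (m - c • m₂) = k + c • k' := by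
      have h1 : x • m = k + c • v := hEq.symm
      have h2 : v = k' + x • m₂ := hEq'.symm
      calc x • (m - c • m₂) = x • m - x • (c • m₂) := by rw [smul_sub]
        _ = (k + c • v) - c • (x • m₂) := by rw [h1, smul_comm]
        _ = (k + c • (k' + x • m₂)) - c • (x • m₂) := by rw [← h2]
        _ = k + c • k' := by rw [smul_add]; abel
    rw [this]
    exact K.add_mem hk (K.smul_mem c hk')
  have := hx _ hxm
  have hfin : m = (m - c • m₂) + c • m₂ := by abel
  rw [hfin]
  exact Submodule.add_mem _ (Submodule.mem_sup_left this)
    (Submodule.mem_sup_right (mem_span_smul_top.mpr ⟨m₂, rfl⟩))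

lemma take_succ_eq {l : List R} {i : ℕ} (h : i < l.length) :
    l.take (i + 1) = l.take i ++ [l[i]] := by
  rw [List.take_succ]
  simp [List.getElem?_eq_getElem h]

lemma stages_cons {N : Submodule R M} {cs : List R} {c : R} (hcs : Stages N cs)
    (hc : ∀ i, i ≤ cs.length → RegM (N ⊔ Ideal.ofList (cs.take i) • ⊤) c) :
    Stages N (c :: cs) := by
  intro i hi
  match i with
  | 0 =>
    have := hc 0 (Nat.zero_le _)
    simpa [stage_nil] using this
  | (i + 1) =>
    have hi' : i < cs.length := by simpa using hi
    have hgoal : ((c :: cs).take (i + 1)) = c :: cs.take i := rfl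
    show RegM (N ⊔ Ideal.ofList ((c :: cs).take (i+1)) • ⊤) ((c :: cs)[i+1])
    rw [hgoal, List.getElem_cons_succ, stage_cons' N c (cs.take i)]
    refine regM_swap (hcs i hi') ?_
    have : (N ⊔ Ideal.ofList (cs.take i) • ⊤) ⊔ Ideal.span {cs[i]} • ⊤
        = N ⊔ Ideal.ofList (cs.take (i+1)) • ⊤ := by
      rw [take_succ_eq hi', stage_concat]
    rw [this]
    exact hc (i + 1) hi'

lemma stages_prefix {N : Submodule R M} {l : List R} (h : Stages N l) (k : ℕ) :
    Stages N (l.take k) := by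
  intro i hi
  have hik : i < k := by simp at hi; omega
  have hil : i < l.length := by simp at hi; omega
  have h1 : (l.take k).take i = l.take i := by rw [List.take_take, min_eq_left (by omega)]
  have h2 : (l.take k)[i] = l[i] := List.getElem_take
  rw [h1, h2]
  exact h i hil

lemma stages_tail {N : Submodule R M} {l : List R} {c : R} (h : Stages N (c :: l)) :
    Stages (N ⊔ Ideal.span {c} • ⊤) l := by
  intro i hi
  have := h (i + 1) (by simpa using hi)
  have hgoal : ((c :: l).take (i + 1)) = c :: l.take i := rfl
  rw [hgoal, List.getElem_cons_succ, stage_cons] at this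
  exact this

lemma stages_concat {N : Submodule R M} {l : List R} {g : R} (h : Stages N l)
    (hg : RegM (N ⊔ Ideal.ofList l • ⊤) g) : Stages N (l ++ [g]) := by
  intro i hi
  simp only [List.length_append, List.length_singleton] at hi
  by_cases hil : i < l.length
  · have h1 : (l ++ [g]).take i = l.take i := List.take_append_of_le_length (by omega)
    have h2 : (l ++ [g])[i] = l[i] := List.getElem_append_left hil
    rw [h1, h2]
    exact h i hil
  · have hieq : i = l.length := by omega
    subst hieq
    have h1 : (l ++ [g]).take l.length = l := by
      rw [List.take_append_of_le_length le_rfl, List.take_length]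
    have h2 : (l ++ [g])[l.length] = g := by simp
    rw [h1, h2]
    exact hg

lemma stages_singleton {N : Submodule R M} {b : R} (h : RegM N b) : Stages N [b] := by
  intro i hi
  have : i = 0 := by simpa using hi
  subst this
  simpa [stage_nil] using h

end Stages

section Kap
variable {R : Type*} [CommRing R] {M : Type*} [AddCommGroup M] [Module R M]
variable [IsNoetherianRing R] [Module.Finite R M]

lemma exists_assQ_le {N : Submodule R M} {J : Ideal R}
    (hZ : ∀ r ∈ J, ¬ RegM N r) : ∃ P ∈ AssQ N, J ≤ P := by
  classical
  have hfin := assQ_finite (M := M) N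
  have hsub : (J : Set R) ⊆ ⋃ P ∈ ((hfin.toFinset : Finset (Ideal R)) : Set (Ideal R)),
      ((id P : Ideal R) : Set R) := by
    intro r hr
    obtain ⟨P, hP, hrP⟩ := exists_assQ_of_not_regM (hZ r hr)
    exact Set.mem_biUnion (by simpa using hfin.mem_toFinset.mpr hP) hrP
  have := (Ideal.subset_union_prime (R := R) (s := hfin.toFinset) (f := id) ⊥ ⊥
    (fun P hP _ _ => mem_assQ_isPrime (hfin.mem_toFinset.mp hP))).mp hsub
  obtain ⟨P, hP, hle⟩ := this
  exact ⟨P, hfin.mem_toFinset.mp hP, hle⟩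

lemma k1 {N : Submodule R M} {J : Ideal R} {a b : R}
    (ha : RegM N a) (hb : RegM N b) (hbJ : b ∈ J)
    (hZ : ∀ r ∈ J, ¬ RegM (N ⊔ Ideal.span {a} • ⊤) r) :
    ∀ r ∈ J, ¬ RegM (N ⊔ Ideal.span {b} • ⊤) r := by
  obtain ⟨P, hP, hJP⟩ := exists_assQ_le hZ
  obtain ⟨u, huN, huann⟩ := exists_witness_of_assQ hP
  have hJu : ∀ t ∈ J, t • u ∈ N ⊔ Ideal.span {a} • ⊤ := fun t ht => huann t (hJP ht)
  have hbu := hJu b hbJ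
  rw [Submodule.mem_sup] at hbu
  obtain ⟨n₀, hn₀, w, hw, hEqb⟩ := hbu
  obtain ⟨v, rfl⟩ := mem_span_smul_top.mp hw
  intro t ht
  rw [not_regM_iff]
  refine ⟨v, ?_, ?_⟩
  · intro hv
    rw [Submodule.mem_sup] at hv
    obtain ⟨n₂, hn₂, w', hw', hEq₂⟩ := hv
    obtain ⟨m, rfl⟩ := mem_span_smul_top.mp hw'
    apply huN
    have hkey : b • (u - a • m) ∈ N := by
      have heq : b • (u - a • m) = n₀ + a • n₂ := by
        have h1 : b • u = n₀ + a • v := hEqb.symm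
        have h2 : v = n₂ + b • m := hEq₂.symm
        calc b • (u - a • m) = b • u - b • (a • m) := by rw [smul_sub]
          _ = n₀ + a • (n₂ + b • m) - a • (b • m) := by rw [h1, h2, smul_comm b a m]
          _ = n₀ + a • n₂ := by rw [smul_add]; abel
      rw [heq]
      exact N.add_mem hn₀ (N.smul_mem a hn₂)
    have hmem := hb _ hkey
    have hfin : u = (u - a • m) + a • m := by abel
    rw [hfin]
    exact Submodule.add_mem _ (Submodule.mem_sup_left hmem)
      (Submodule.mem_sup_right (mem_span_smul_top.mpr ⟨m, rfl⟩))
  · have htu := hJu t ht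
    rw [Submodule.mem_sup] at htu
    obtain ⟨n₁, hn₁, w₁, hw₁, hEq₁⟩ := htu
    obtain ⟨w₂, rfl⟩ := mem_span_smul_top.mp hw₁
    have hkey : a • (t • v - b • w₂) ∈ N := by
      have heq : a • (t • v - b • w₂) = b • n₁ - t • n₀ := by
        have h1 : a • v = b • u - n₀ := by rw [← hEqb]; abel
        have h2 : a • w₂ = t • u - n₁ := by rw [← hEq₁]; abel
        calc a • (t • v - b • w₂) = t • (a • v) - b • (a • w₂) := by
              rw [smul_sub, smul_comm a t v, smul_comm a b w₂]
          _ = t • (b • u - n₀) - b • (t • u - n₁) := by rw [h1, h2]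
          _ = b • n₁ - t • n₀ := by
              rw [smul_sub, smul_sub, smul_comm t b u]; abel
      rw [heq]
      exact N.sub_mem (N.smul_mem b hn₁) (N.smul_mem t hn₀)
    have hmem := ha _ hkey
    have hfin : t • v = (t • v - b • w₂) + b • w₂ := by abel
    rw [hfin]
    exact Submodule.add_mem _ (Submodule.mem_sup_left hmem)
      (Submodule.mem_sup_right (mem_span_smul_top.mpr ⟨w₂, rfl⟩))

lemma kap118 : ∀ (n : ℕ) (N : Submodule R M) (J : Ideal R) (as bs : List R),
    as.length = n → bs.length = n →
    (∀ r ∈ as, r ∈ J) → (∀ r ∈ bs, r ∈ J) →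
    Stages N as → Stages N bs →
    (∃ r ∈ J, RegM (N ⊔ Ideal.ofList as • ⊤) r) →
    (∃ r ∈ J, RegM (N ⊔ Ideal.ofList bs • ⊤) r) := by
  intro n
  induction n with
  | zero =>
    intro N J as bs ha hb _ _ _ _ h
    rw [List.length_eq_zero_iff] at ha hb
    subst ha; subst hb; exact h
  | succ n ih =>
    intro N J as bs hlas hlbs hasJ hbsJ hasS hbsS hex
    classical
    have hnas : n < as.length := by omega
    have hnbs : n < bs.length := by omega
    have hasSplit : as = as.take n ++ [as[n]] := by
      conv_lhs => rw [← List.take_append_drop n as]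
      congr 1
      rw [List.drop_eq_getElem_cons hnas]
      congr 1
      exact List.drop_eq_nil_of_le (by omega)
    have hbsSplit : bs = bs.take n ++ [bs[n]] := by
      conv_lhs => rw [← List.take_append_drop n bs]
      congr 1
      rw [List.drop_eq_getElem_cons hnbs]
      congr 1
      exact List.drop_eq_nil_of_le (by omega)
    have hAs : N ⊔ Ideal.ofList as • ⊤
        = (N ⊔ Ideal.ofList (as.take n) • ⊤) ⊔ Ideal.span {as[n]} • ⊤ := by
      rw [← stage_concat, ← hasSplit]
    have hBs : N ⊔ Ideal.ofList bs • ⊤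
        = (N ⊔ Ideal.ofList (bs.take n) • ⊤) ⊔ Ideal.span {bs[n]} • ⊤ := by
      rw [← stage_concat, ← hbsSplit]
    -- selection of j ∈ J regular on all the stage modules
    have hTh : ∀ K ∈ ((Finset.range (n+1)).image
          (fun i => N ⊔ Ideal.ofList (as.take i) • ⊤)) ∪
        ((Finset.range (n+1)).image (fun i => N ⊔ Ideal.ofList (bs.take i) • ⊤)),
        ∃ r ∈ Ideal.span {(0:R)} ⊔ J, RegM K r := by
      intro K hK
      rw [Finset.mem_union] at hK
      rcases hK with hK | hK <;> rw [Finset.mem_image] at hK <;> obtain ⟨i, hi, rfl⟩ := hK <;>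
        rw [Finset.mem_range] at hi
      · exact ⟨as[i]'(by omega), Submodule.mem_sup_right (hasJ _ (List.getElem_mem _)),
          hasS i (by omega)⟩
      · exact ⟨bs[i]'(by omega), Submodule.mem_sup_right (hbsJ _ (List.getElem_mem _)),
          hbsS i (by omega)⟩
    obtain ⟨j, hjJ, -, hjreg⟩ := pick_reg _ 0 J hTh
    have hcreg_as : ∀ i, i ≤ n → RegM (N ⊔ Ideal.ofList (as.take i) • ⊤) j := by
      intro i hi
      have := hjreg _ (Finset.mem_union_left _
        (Finset.mem_image.mpr ⟨i, Finset.mem_range.mpr (by omega), rfl⟩))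
      rwa [zero_add] at this
    have hcreg_bs : ∀ i, i ≤ n → RegM (N ⊔ Ideal.ofList (bs.take i) • ⊤) j := by
      intro i hi
      have := hjreg _ (Finset.mem_union_right _
        (Finset.mem_image.mpr ⟨i, Finset.mem_range.mpr (by omega), rfl⟩))
      rwa [zero_add] at this
    -- step 1 : transfer regularity beyond as.take n from as[n] to j
    have hstep1 : ∃ r ∈ J, RegM ((N ⊔ Ideal.ofList (as.take n) • ⊤) ⊔ Ideal.span {j} • ⊤) r := by
      by_contra hno
      push_neg at hno
      have hk := k1 (N := N ⊔ Ideal.ofList (as.take n) • ⊤) (a := j) (b := as[n])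
        (hcreg_as n le_rfl) (hasS n hnas) (hasJ _ (List.getElem_mem _)) hno
      obtain ⟨r, hrJ, hr⟩ := hex
      exact hk r hrJ (by rwa [← hAs])
    -- step 2 : move j to the front
    have hlenA : (as.take n).length = n := by rw [List.length_take]; omega
    have hlenB : (bs.take n).length = n := by rw [List.length_take]; omega
    have hstagesA : Stages N (j :: as.take n) := by
      refine stages_cons (stages_prefix hasS n) ?_
      intro i hi
      rw [List.take_take, min_eq_left (by omega)]
      exact hcreg_as i (by omega)
    have hstagesB : Stages N (j :: bs.take n) := by
      refine stages_cons (stages_prefix hbsS n) ?_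
      intro i hi
      rw [List.take_take, min_eq_left (by omega)]
      exact hcreg_bs i (by omega)
    have htailA := stages_tail hstagesA
    have htailB := stages_tail hstagesB
    -- feed the inductive hypothesis
    have hfeed : ∃ r ∈ J, RegM ((N ⊔ Ideal.span {j} • ⊤) ⊔ Ideal.ofList (as.take n) • ⊤) r := by
      obtain ⟨r, hrJ, hr⟩ := hstep1
      exact ⟨r, hrJ, by rwa [sup_right_comm]⟩
    have hIH := ih (N ⊔ Ideal.span {j} • ⊤) J (as.take n) (bs.take n) hlenA hlenB
      (fun r hr => hasJ r (List.mem_of_mem_take hr)) (fun r hr => hbsJ r (List.mem_of_mem_take hr))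
      htailA htailB hfeed
    -- step 3 : transfer back from j to bs[n]
    by_contra hno
    push_neg at hno
    have hk := k1 (N := N ⊔ Ideal.ofList (bs.take n) • ⊤) (a := bs[n]) (b := j)
      (hbsS n hnbs) (hcreg_bs n le_rfl) hjJ (fun r hr => by
        have := hno r hr
        intro hreg
        exact this (by rwa [hBs]))
    obtain ⟨r, hrJ, hr⟩ := hIH
    exact hk r hrJ (by rwa [sup_right_comm] at hr)

lemma maximal_length {N : Submodule R M} {J : Ideal R} {as : List R}
    (hasJ : ∀ r ∈ as, r ∈ J) (hasS : Stages N as)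
    (hmax : ∀ r ∈ J, ¬ RegM (N ⊔ Ideal.ofList as • ⊤) r)
    {bs : List R} (hbsJ : ∀ r ∈ bs, r ∈ J) (hbsS : Stages N bs) :
    bs.length ≤ as.length := by
  by_contra hlen
  push_neg at hlen
  have hnb : as.length < bs.length := hlen
  have hfeed : ∃ r ∈ J, RegM (N ⊔ Ideal.ofList (bs.take as.length) • ⊤) r :=
    ⟨bs[as.length]'(by omega), hbsJ _ (List.getElem_mem _), hbsS as.length (by omega)⟩
  have := kap118 as.length N J (bs.take as.length) as
    (by rw [List.length_take]; omega) rfl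
    (fun r hr => hbsJ r (List.mem_of_mem_take hr)) hasJ
    (stages_prefix hbsS as.length) hasS hfeed
  obtain ⟨r, hrJ, hr⟩ := this
  exact hmax r hrJ hr

lemma extend_seq {N : Submodule R M} {J : Ideal R} {gs cs : List R}
    (hgsJ : ∀ r ∈ gs, r ∈ J) (hgsS : Stages N gs)
    (hcsJ : ∀ r ∈ cs, r ∈ J) (hcsS : Stages N cs)
    (hlen : gs.length < cs.length) : ∃ g ∈ J, Stages N (gs ++ [g]) := by
  by_cases hg : ∃ g ∈ J, RegM (N ⊔ Ideal.ofList gs • ⊤) g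
  · obtain ⟨g, hgJ, hgreg⟩ := hg
    exact ⟨g, hgJ, stages_concat hgsS hgreg⟩
  · push_neg at hg
    have := maximal_length hgsJ hgsS hg hcsJ hcsS
    omega

lemma upgrade_seq : ∀ (k : ℕ) {N : Submodule R M} {J : Ideal R} (gs cs : List R),
    (∀ r ∈ gs, r ∈ J) → Stages N gs → (∀ r ∈ cs, r ∈ J) → Stages N cs →
    gs.length + k = cs.length →
    ∃ ts : List R, (∀ r ∈ ts, r ∈ J) ∧ Stages N (gs ++ ts) ∧ ts.length = k := by
  intro k
  induction k with
  | zero =>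
    intro N J gs cs hgsJ hgsS _ _ _
    exact ⟨[], by simp, by simpa using hgsS, rfl⟩
  | succ k ih =>
    intro N J gs cs hgsJ hgsS hcsJ hcsS hlen
    obtain ⟨g, hgJ, hgS⟩ := extend_seq hgsJ hgsS hcsJ hcsS (by omega)
    have hgsJ' : ∀ r ∈ gs ++ [g], r ∈ J := by
      intro r hr
      rcases List.mem_append.mp hr with h | h
      · exact hgsJ r h
      · rw [List.mem_singleton] at h; subst h; exact hgJ
    obtain ⟨ts, htsJ, htsS, htslen⟩ := ih (gs ++ [g]) cs hgsJ' hgS hcsJ hcsS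
      (by simp at hlen ⊢; omega)
    refine ⟨[g] ++ ts, ?_, by rwa [← List.append_assoc], by simp; omega⟩
    intro r hr
    rcases List.mem_append.mp hr with h | h
    · rw [List.mem_singleton] at h; subst h; exact hgJ
    · exact htsJ r h

end Kap

section Replace
variable {R : Type*} [CommRing R] {M : Type*} [AddCommGroup M] [Module R M]

lemma regM_congr {K : Submodule R M} {t t' b : R} (hb : ∀ x : M, b • x ∈ K)
    (h : ∃ r, t = t' + r * b) (ht' : RegM K t') : RegM K t := by
  obtain ⟨r, rfl⟩ := h
  intro x hx
  apply ht'
  have heq : t' • x = (t' + r * b) • x - r • (b • x) := by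
    rw [add_smul, mul_smul]; abel
  rw [heq]
  exact K.sub_mem hx (K.smul_mem r (hb x))

lemma stage_sing_congr {K : Submodule R M} {b t t' : R}
    (hbK : Ideal.span {b} • (⊤ : Submodule R M) ≤ K)
    (h : ∃ r, t = t' + r * b) : K ⊔ Ideal.span {t} • ⊤ = K ⊔ Ideal.span {t'} • ⊤ := by
  obtain ⟨r, rfl⟩ := h
  apply le_antisymm
  · refine sup_le le_sup_left ?_
    intro x hx
    obtain ⟨y, rfl⟩ := mem_span_smul_top.mp hx
    have heq : (t' + r * b) • y = t' • y + r • (b • y) := by rw [add_smul, mul_smul]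
    rw [heq]
    exact Submodule.add_mem _ (Submodule.mem_sup_right (mem_span_smul_top.mpr ⟨y, rfl⟩))
      (Submodule.mem_sup_left (K.smul_mem r (hbK (mem_span_smul_top.mpr ⟨y, rfl⟩))))
  · refine sup_le le_sup_left ?_
    intro x hx
    obtain ⟨y, rfl⟩ := mem_span_smul_top.mp hx
    have heq : t' • y = (t' + r * b) • y - r • (b • y) := by rw [add_smul, mul_smul]; abel
    rw [heq]
    exact Submodule.sub_mem _ (Submodule.mem_sup_right (mem_span_smul_top.mpr ⟨y, rfl⟩))
      (Submodule.mem_sup_left (K.smul_mem r (hbK (mem_span_smul_top.mpr ⟨y, rfl⟩))))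

lemma stage_eq_congr {N : Submodule R M} {b : R}
    (hb : Ideal.span {b} • (⊤ : Submodule R M) ≤ N) :
    ∀ {l l' : List R}, List.Forall₂ (fun t t' => ∃ r, t = t' + r * b) l l' →
    N ⊔ Ideal.ofList l • ⊤ = N ⊔ Ideal.ofList l' • ⊤ := by
  intro l l' h
  induction h with
  | nil => rfl
  | @cons t t' l l' hrel hrest ih =>
    rw [stage_cons' N t l, stage_cons' N t' l', ih]
    exact stage_sing_congr (hb.trans le_sup_left) hrel

lemma stages_congr {N : Submodule R M} {b : R}
    (hb : Ideal.span {b} • (⊤ : Submodule R M) ≤ N)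
    {l l' : List R} (hrel : List.Forall₂ (fun t t' => ∃ r, t = t' + r * b) l l')
    (h : Stages N l) : Stages N l' := by
  intro i hi
  have hlen := hrel.length_eq
  have hil : i < l.length := by omega
  have hstage : N ⊔ Ideal.ofList (l'.take i) • ⊤ = N ⊔ Ideal.ofList (l.take i) • ⊤ :=
    (stage_eq_congr hb (List.forall₂_take i hrel)).symm
  rw [hstage]
  have hrelI : ∃ r, l[i] = l'[i] + r * b := by
    rcases List.forall₂_iff_get.mp hrel with ⟨-, hget⟩
    have h2 := hget i hil hi
    simp only [List.get_eq_getElem] at h2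
    exact h2
  obtain ⟨r, hEq⟩ := hrelI
  have hEq' : l'[i] = l[i] + (-r) * b := by rw [hEq]; ring
  refine regM_congr ?_ ⟨-r, hEq'⟩ (h i hil)
  intro x
  exact Submodule.mem_sup_left (hb (mem_span_smul_top.mpr ⟨x, rfl⟩))

lemma exists_replace {I' : Ideal R} {b : R} :
    ∀ (l : List R), (∀ t ∈ l, t ∈ Ideal.span {b} ⊔ I') →
    ∃ l' : List R, (∀ t ∈ l', t ∈ I') ∧ List.Forall₂ (fun t t' => ∃ r, t = t' + r * b) l l' := by
  intro l
  induction l with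
  | nil => exact fun _ => ⟨[], by simp, List.Forall₂.nil⟩
  | cons t l ih =>
    intro h
    obtain ⟨l', hl'I, hl'rel⟩ := ih (fun t' ht' => h t' (List.mem_cons_of_mem _ ht'))
    have ht := h t List.mem_cons_self
    rw [Submodule.mem_sup] at ht
    obtain ⟨y, hy, z, hz, hEq⟩ := ht
    obtain ⟨r, rfl⟩ := Ideal.mem_span_singleton'.mp hy
    refine ⟨z :: l', ?_, List.Forall₂.cons ⟨r, by rw [← hEq]; ring⟩ hl'rel⟩
    intro t' ht'
    rcases List.mem_cons.mp ht' with rfl | h'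
    exacts [hz, hl'I _ h']

end Replace

section Unmixed
variable {R : Type*} [CommRing R] {M : Type*} [AddCommGroup M] [Module R M]
variable [IsNoetherianRing R] [Module.Finite R M]

lemma unmixed : ∀ (s : ℕ) (N : Submodule R M) (I P : Ideal R), P.IsPrime →
    (∃ g : Fin s → R, I = Ideal.span (Set.range g)) →
    (∃ ds : List R, ds.length = s ∧ (∀ r ∈ ds, r ∈ I) ∧ Stages N ds) →
    I ≤ P →
    (∃ u : M, u ∉ N ⊔ I • ⊤ ∧ ∀ p ∈ P, p • u ∈ N ⊔ I • ⊤) →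
    ∀ cs : List R, (∀ r ∈ cs, r ∈ P) → Stages N cs → cs.length ≤ s := by
  intro s
  induction s with
  | zero =>
    intro N I P hP hgen hds hIP hu cs hcsP hcsS
    obtain ⟨g, hgI⟩ := hgen
    have hI : I = ⊥ := by
      rw [hgI, Set.range_eq_empty g, Ideal.span_empty]
    have hNI : N ⊔ I • ⊤ = N := by rw [hI]; simp
    obtain ⟨u, huN, huP⟩ := hu
    simp only [hNI] at huN huP
    by_contra hlen
    push_neg at hlen
    have h0 : 0 < cs.length := by omega
    have hc := hcsS 0 h0
    simp only [List.take_zero, stage_nil] at hc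
    exact huN (hc u (huP _ (hcsP _ (List.getElem_mem _))))
  | succ s ih =>
    intro N I P hP hgen hds hIP hu cs hcsP hcsS
    by_contra hlen
    push_neg at hlen
    obtain ⟨g, hgI⟩ := hgen
    obtain ⟨ds, hdslen, hdsI, hdsS⟩ := hds
    obtain ⟨u, huN, huP⟩ := hu
    classical
    have hsplit : I = Ideal.span {g 0} ⊔ Ideal.span (Set.range (Fin.tail g)) := by
      rw [hgI, Fin.range_fin_succ, Ideal.span_insert]
    have hd0 : 0 < ds.length := by omega
    have hpick : ∀ K ∈ ({N} : Finset (Submodule R M)),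
        ∃ r ∈ Ideal.span {g 0} ⊔ Ideal.span (Set.range (Fin.tail g)), RegM K r := by
      intro K hK
      rw [Finset.mem_singleton] at hK; subst hK
      refine ⟨ds[0], ?_, ?_⟩
      · rw [← hsplit]; exact hdsI _ (List.getElem_mem _)
      · have := hdsS 0 hd0
        simpa only [List.take_zero, stage_nil] using this
    obtain ⟨j, hjI, hbmem, hbreg⟩ := pick_reg {N} (g 0) _ hpick
    have hbreg' : RegM N (g 0 + j) := hbreg N (Finset.mem_singleton_self N)
    have hbI : g 0 + j ∈ I := by rw [hsplit]; exact hbmem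
    have hIb : I = Ideal.span {g 0 + j} ⊔ Ideal.span (Set.range (Fin.tail g)) := by
      apply le_antisymm
      · rw [hsplit]
        apply sup_le
        · refine (Ideal.span_singleton_le_iff_mem _).mpr ?_
          have hmem2 : (g 0 + j) - j ∈ Ideal.span {g 0 + j} ⊔ Ideal.span (Set.range (Fin.tail g)) :=
            Submodule.sub_mem _ (Submodule.mem_sup_left (Ideal.subset_span rfl))
              (Submodule.mem_sup_right hjI)
          simpa using hmem2
        · exact le_sup_right
      · apply sup_le
        · exact (Ideal.span_singleton_le_iff_mem _).mpr hbI
        · rw [hsplit]; exact le_sup_right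
    have hbS : Stages N [g 0 + j] := stages_singleton hbreg'
    obtain ⟨ts, htsI, htsS, htslen⟩ := upgrade_seq s [g 0 + j] ds
      (by intro r hr; rw [List.mem_singleton] at hr; subst hr; exact hbI) hbS hdsI hdsS
      (by simp; omega)
    have htailS : Stages (N ⊔ Ideal.span {g 0 + j} • ⊤) ts := by
      refine stages_tail (l := ts) (c := g 0 + j) ?_
      simpa using htsS
    obtain ⟨ts', hts'I, hrel⟩ := exists_replace (I' := Ideal.span (Set.range (Fin.tail g)))
      (b := g 0 + j) ts (fun t ht => by rw [← hIb]; exact htsI t ht)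
    have hts'S : Stages (N ⊔ Ideal.span {g 0 + j} • ⊤) ts' :=
      stages_congr le_sup_right hrel htailS
    have hts'len : ts'.length = s := by rw [← hrel.length_eq]; exact htslen
    have hNI : (N ⊔ Ideal.span {g 0 + j} • ⊤) ⊔ Ideal.span (Set.range (Fin.tail g)) • ⊤
        = N ⊔ I • ⊤ := by
      rw [sup_assoc, ← Submodule.sup_smul, ← hIb]
    obtain ⟨us, husP, husS, huslen⟩ := upgrade_seq (cs.length - 1) [g 0 + j] cs
      (by intro r hr; rw [List.mem_singleton] at hr; subst hr; exact hIP hbI) hbS hcsP hcsS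
      (by simp; omega)
    have hustail : Stages (N ⊔ Ideal.span {g 0 + j} • ⊤) us := by
      refine stages_tail (l := us) (c := g 0 + j) ?_
      simpa using husS
    have hfinal := ih (N ⊔ Ideal.span {g 0 + j} • ⊤) (Ideal.span (Set.range (Fin.tail g))) P hP
      ⟨Fin.tail g, rfl⟩ ⟨ts', hts'len, hts'I, hts'S⟩
      (le_trans (by rw [hIb]; exact le_sup_right) hIP)
      ⟨u, by rwa [hNI], fun p hp => by rw [hNI]; exact huP p hp⟩
      us husP hustail
    omega

end Unmixed

section Bridge
variable {R : Type*} [CommRing R] {M : Type*} [AddCommGroup M] [Module R M]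

lemma stages_bot_iff {l : List R} :
    Stages (⊥ : Submodule R M) l ↔ IsWeaklyRegular M l := by
  rw [isWeaklyRegular_iff]
  constructor
  · intro h i hi
    have := h i hi
    rw [bot_sup_eq, regM_iff_isSMulRegular] at this
    exact this
  · intro h i hi
    rw [bot_sup_eq, regM_iff_isSMulRegular]
    exact h i hi

lemma ideal_smul_top {I : Ideal R} : I • (⊤ : Submodule R R) = I := by simp

end Bridge

/-- The saturation `(I : G^∞)`: elements `f` with `f · G^N ⊆ I` for some `N`. -/
noncomputable def Ideal.satPow {R : Type*} [CommRing R] (I G : Ideal R) : Ideal R :=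
  ⨆ n : ℕ, Submodule.colon I ((G ^ n : Ideal R) : Set R)

/-- The height of an ideal: the minimal height of a prime containing it. -/
noncomputable def Ideal.ht {R : Type*} [CommRing R] (I : Ideal R) : ℕ∞ :=
  ⨅ (P : PrimeSpectrum R) (_ : I ≤ P.asIdeal), Order.height P

/-- The grade of an ideal: supremum of lengths of regular sequences contained in it. -/
noncomputable def Ideal.grade {R : Type*} [CommRing R] (I : Ideal R) : ℕ∞ :=
  ⨆ (rs : {l : List R // (∀ r ∈ l, r ∈ I) ∧ RingTheory.Sequence.IsRegular R l}),
    (rs.1.length : ℕ∞)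

/-- A Noetherian ring is Cohen–Macaulay iff grade equals height for every proper ideal. -/
def IsCohenMacaulayRing (R : Type*) [CommRing R] : Prop :=
  IsNoetherianRing R ∧ ∀ I : Ideal R, I ≠ ⊤ → Ideal.grade I = Ideal.ht I


section Glue
variable {R : Type*} [CommRing R]

lemma ht_top_eq : (⊤ : Ideal R).ht = ⊤ := by
  rw [Ideal.ht]
  exact iInf_eq_top.mpr fun P => iInf_neg (fun h => P.2.ne_top (top_le_iff.mp h))

lemma ht_anti {I J : Ideal R} (h : I ≤ J) : I.ht ≤ J.ht := by
  rw [Ideal.ht, Ideal.ht]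
  exact le_iInf fun P => le_iInf fun hP => iInf₂_le P (h.trans hP)

lemma grade_witness {I : Ideal R} {s : ℕ} (h : Ideal.grade I = s) :
    ∃ l : List R, (∀ r ∈ l, r ∈ I) ∧ IsWeaklyRegular R l ∧ l.length = s := by
  rcases Nat.eq_zero_or_pos s with rfl | hs
  · exact ⟨[], by simp, IsWeaklyRegular.nil R R, rfl⟩
  · have h1 : ¬ (Ideal.grade I ≤ ((s - 1 : ℕ) : ℕ∞)) := by
      rw [h]
      intro hle
      have := Nat.cast_le.mp hle
      omega
    rw [Ideal.grade, iSup_le_iff] at h1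
    push_neg at h1
    obtain ⟨rs, hrs⟩ := h1
    have hup : (rs.1.length : ℕ∞) ≤ (s : ℕ∞) := by
      rw [← h, Ideal.grade]
      exact le_iSup (fun rs : {l : List R // (∀ r ∈ l, r ∈ I) ∧ IsRegular R l} =>
        (rs.1.length : ℕ∞)) rs
    have hlow : ¬ ((rs.1.length : ℕ∞) ≤ ((s - 1 : ℕ) : ℕ∞)) := not_le.mpr hrs
    have hlen : rs.1.length = s := by
      have h2 := Nat.cast_le.mp hup
      have h3 : ¬ (rs.1.length ≤ s - 1) := fun hc => hlow (Nat.cast_le.mpr hc)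
      omega
    exact ⟨rs.1, rs.2.1, rs.2.2.toIsWeaklyRegular, hlen⟩

lemma grade_le_of_bound {I : Ideal R} {s : ℕ}
    (h : ∀ l : List R, (∀ r ∈ l, r ∈ I) → IsWeaklyRegular R l → l.length ≤ s) :
    Ideal.grade I ≤ (s : ℕ∞) := by
  rw [Ideal.grade]
  exact iSup_le fun rs => Nat.cast_le.mpr (h rs.1 rs.2.1 rs.2.2.toIsWeaklyRegular)

end Glue


theorem stmt0 {R : Type*} [CommRing R] (hCM : IsCohenMacaulayRing R)
    (I G : Ideal R) (s : ℕ) (f : Fin s → R)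
    (hgen : I = Ideal.span (Set.range f)) (hs : I.ht = s) (hlt : I.ht < G.ht) :
    I.satPow G = I := by
  obtain ⟨hNoeth, hCMeq⟩ := hCM
  haveI : IsNoetherianRing R := hNoeth
  have hItop : I ≠ ⊤ := by
    rintro rfl
    rw [ht_top_eq] at hs
    exact (ENat.top_ne_coe s) hs
  have hgrI : Ideal.grade I = s := by rw [hCMeq I hItop, hs]
  obtain ⟨ds, hdsI, hdsW, hdslen⟩ := grade_witness hgrI
  apply le_antisymm
  · rw [Ideal.satPow]
    apply iSup_le
    intro n x hx
    by_contra hxI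
    obtain ⟨P, ⟨y, hyI, hyP, hcle⟩, hmax⟩ := set_has_maximal_iff_noetherian.mpr hNoeth
      {J : Ideal R | ∃ y, y ∉ I ∧ J = I.colon (Ideal.span {y}) ∧ I.colon (Ideal.span {x}) ≤ J}
      ⟨I.colon (Ideal.span {x}), x, hxI, rfl, le_rfl⟩
    subst hyP
    have hPtop : I.colon (Ideal.span {y}) ≠ ⊤ := by
      intro h
      apply hyI
      have h1 : (1:R) ∈ I.colon (Ideal.span {y}) := h ▸ Submodule.mem_top
      rw [Ideal.mem_colon_span_singleton, one_mul] at h1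
      exact h1
    have hlemul : ∀ a : R, I.colon (Ideal.span {y}) ≤ I.colon (Ideal.span {a * y}) := by
      intro a t ht
      rw [Ideal.mem_colon_span_singleton] at ht ⊢
      have heq : t * (a * y) = a * (t * y) := by ring
      rw [heq]
      exact I.mul_mem_left a ht
    have hPprime : (I.colon (Ideal.span {y})).IsPrime := by
      refine ⟨hPtop, ?_⟩
      intro a b hab
      by_contra hor
      push_neg at hor
      obtain ⟨haP, hbP⟩ := hor
      rw [Ideal.mem_colon_span_singleton] at haP
      have hmem : I.colon (Ideal.span {a * y}) ∈ {J : Ideal R | ∃ z, z ∉ I ∧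
          J = I.colon (Ideal.span {z}) ∧ I.colon (Ideal.span {x}) ≤ J} :=
        ⟨a * y, haP, rfl, le_trans hcle (hlemul a)⟩
      have hEq : I.colon (Ideal.span {y}) = I.colon (Ideal.span {a * y}) := by
        by_contra hne
        exact hmax _ hmem (lt_of_le_of_ne (hlemul a) hne)
      apply hbP
      rw [hEq, Ideal.mem_colon_span_singleton]
      have heq : b * (a * y) = (a * b) * y := by ring
      rw [heq]
      rw [Ideal.mem_colon_span_singleton] at hab
      exact hab
    have hGn : G ^ n ≤ I.colon (Ideal.span {y}) := by
      refine le_trans ?_ hcle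
      intro t ht
      rw [Ideal.mem_colon_span_singleton, mul_comm]
      exact Submodule.mem_colon.mp hx t ht
    have hn0 : n ≠ 0 := by
      rintro rfl
      rw [pow_zero] at hGn
      exact hPtop (top_le_iff.mp (by rwa [Ideal.one_eq_top] at hGn))
    have hGP : G ≤ I.colon (Ideal.span {y}) := (hPprime.pow_le_iff hn0).mp hGn
    have hIP : I ≤ I.colon (Ideal.span {y}) := by
      intro t ht
      rw [Ideal.mem_colon_span_singleton]
      exact I.mul_mem_right y ht
    have hbotI : (⊥ : Submodule R R) ⊔ I • ⊤ = I := by rw [ideal_smul_top, bot_sup_eq]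
    have hbound : ∀ cs : List R, (∀ r ∈ cs, r ∈ I.colon (Ideal.span {y})) →
        IsWeaklyRegular R cs → cs.length ≤ s := by
      intro cs hcsP hcsW
      refine unmixed s (⊥ : Submodule R R) I (I.colon (Ideal.span {y})) hPprime ⟨f, hgen⟩
        ⟨ds, hdslen, hdsI, stages_bot_iff.mpr hdsW⟩ hIP ⟨y, ?_, ?_⟩ cs hcsP
        (stages_bot_iff.mpr hcsW)
      · rw [hbotI]; exact hyI
      · intro p hp
        rw [hbotI]
        rw [Ideal.mem_colon_span_singleton] at hp
        exact hp
    have hgradeP : Ideal.grade (I.colon (Ideal.span {y})) ≤ (s : ℕ∞) := grade_le_of_bound hbound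
    have hhtP : (I.colon (Ideal.span {y})).ht ≤ (s : ℕ∞) := by
      rw [← hCMeq _ hPtop]; exact hgradeP
    have hhtG : G.ht ≤ I.ht := by
      rw [hs]
      exact le_trans (ht_anti hGP) hhtP
    exact absurd hlt (not_lt.mpr hhtG)
  · rw [Ideal.satPow]
    refine le_trans ?_ (le_iSup _ 0)
    intro t ht
    rw [Submodule.mem_colon]
    intro p hp
    exact I.mul_mem_right p ht
end

section
/- In the polynomial ring R = k[x₀, x₁, y₀, y₁] over a field k, the saturation of the ideal I = (x₀, x₁y₀) with respect to G = (x₀y₀, x₀y₁, x₁y₀, x₁y₁) equals the ideal (x₀, y₀); in particular (x₀, x₁y₀) is not saturated with respect to G. -/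
open MvPolynomial

section Aux
variable {k : Type*} [Field k]

/-- substitute x₀ = y₀ = 0 -/
noncomputable def phiAux (k : Type*) [Field k] :
    MvPolynomial (Fin 4) k →ₐ[k] MvPolynomial (Fin 4) k :=
  aeval (fun i => if i = 0 then 0 else if i = 2 then 0 else X i)

lemma phiAux_X (i : Fin 4) :
    phiAux k (X i) = if i = 0 then 0 else if i = 2 then 0 else X i := by
  rw [phiAux, aeval_X]

lemma phiAux_X0 : phiAux k (X 0) = 0 := by rw [phiAux_X, if_pos rfl]
lemma phiAux_X1 : phiAux k (X 1) = X 1 := by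
  rw [phiAux_X, if_neg (by decide), if_neg (by decide)]
lemma phiAux_X2 : phiAux k (X 2) = 0 := by
  rw [phiAux_X, if_neg (by decide), if_pos rfl]
lemma phiAux_X3 : phiAux k (X 3) = X 3 := by
  rw [phiAux_X, if_neg (by decide), if_neg (by decide)]

lemma sub_phiAux_mem (f : MvPolynomial (Fin 4) k) :
    f - phiAux k f ∈ Ideal.span {X (0 : Fin 4), X 2} := by
  induction f using MvPolynomial.induction_on with
  | C a => rw [phiAux, aeval_C, algebraMap_eq, sub_self]; exact Ideal.zero_mem _
  | add p q hp hq =>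
      have h : p + q - phiAux k (p + q) = (p - phiAux k p) + (q - phiAux k q) := by
        rw [map_add]; ring
      rw [h]; exact Ideal.add_mem _ hp hq
  | mul_X p n hp =>
      by_cases h0 : n = 0
      · subst h0
        rw [map_mul, phiAux_X0, mul_zero, sub_zero]
        exact Ideal.mul_mem_left _ _ (Ideal.subset_span (by simp))
      by_cases h2 : n = 2
      · subst h2
        rw [map_mul, phiAux_X2, mul_zero, sub_zero]
        exact Ideal.mul_mem_left _ _ (Ideal.subset_span (by simp))
      · have hx : phiAux k (X n : MvPolynomial (Fin 4) k) = X n := by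
          rw [phiAux_X, if_neg h0, if_neg h2]
        have h : p * X n - phiAux k (p * X n) = (p - phiAux k p) * X n := by
          rw [map_mul, hx]; ring
        rw [h]
        exact Ideal.mul_mem_right _ _ hp

/-- substitute x₀ = x₁ = 0 -/
noncomputable def psiAux (k : Type*) [Field k] :
    MvPolynomial (Fin 4) k →ₐ[k] MvPolynomial (Fin 4) k :=
  aeval (fun i => if i = 0 then 0 else if i = 1 then 0 else X i)

lemma psiAux_X (i : Fin 4) :
    psiAux k (X i) = if i = 0 then 0 else if i = 1 then 0 else X i := by
  rw [psiAux, aeval_X]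

theorem stmt8aux :
    (Ideal.span {X (0:Fin 4), X 1 * X 2} : Ideal (MvPolynomial (Fin 4) k)).satPow
      (Ideal.span {X 0 * X 2, X 0 * X 3, X 1 * X 2, X 1 * X 3})
      = Ideal.span {X 0, X 2} ∧
    (Ideal.span {X (0:Fin 4), X 1 * X 2} : Ideal (MvPolynomial (Fin 4) k)).satPow
      (Ideal.span {X 0 * X 2, X 0 * X 3, X 1 * X 2, X 1 * X 3})
      ≠ Ideal.span {X 0, X 1 * X 2} := by
  set R := MvPolynomial (Fin 4) k
  set I : Ideal R := Ideal.span {X 0, X 1 * X 2} with hI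
  set G : Ideal R := Ideal.span {X 0 * X 2, X 0 * X 3, X 1 * X 2, X 1 * X 3} with hG
  set J : Ideal R := Ideal.span {X 0, X 2} with hJ
  have hIker : I ≤ RingHom.ker (phiAux k).toRingHom := by
    rw [hI, Ideal.span_le]
    rintro f (rfl | rfl) <;> rw [SetLike.mem_coe, RingHom.mem_ker]
    · exact phiAux_X0
    · show phiAux k (X 1 * X 2) = 0
      rw [map_mul, phiAux_X2, mul_zero]
  have hmain : I.satPow G = J := by
    apply le_antisymm
    · apply iSup_le
      intro n f hf
      have hg : (X 1 * X 3 : R) ^ n ∈ G ^ n := by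
        apply Ideal.pow_mem_pow
        exact Ideal.subset_span (by simp)
      have h1 : f * (X 1 * X 3 : R) ^ n ∈ I := by
        have := Submodule.mem_colon.mp hf _ hg
        simpa [smul_eq_mul] using this
      have h2 : phiAux k (f * (X 1 * X 3 : R) ^ n) = 0 := hIker h1
      have h3 : phiAux k f * (X 1 * X 3 : R) ^ n = 0 := by
        rw [map_mul, map_pow, map_mul, phiAux_X1, phiAux_X3] at h2
        exact h2
      have hne : (X 1 * X 3 : R) ^ n ≠ 0 :=
        pow_ne_zero _ (mul_ne_zero (X_ne_zero _) (X_ne_zero _))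
      have h4 : phiAux k f = 0 := by
        rcases mul_eq_zero.mp h3 with h | h
        · exact h
        · exact absurd h hne
      have h5 := sub_phiAux_mem (k := k) f
      rw [h4, sub_zero] at h5
      exact h5
    · rw [hJ, Ideal.span_le]
      have key : ∀ z : R, z ∈ ({X 0, X 2} : Set R) →
          z ∈ Submodule.colon I ((G ^ 1 : Ideal R) : Set R) := by
        intro z hz
        rw [pow_one, Submodule.mem_colon]
        intro p hp
        rw [SetLike.mem_coe] at hp
        induction hp using Submodule.span_induction with
        | mem g hg =>
            rcases hz with rfl | rfl
            · exact Ideal.mul_mem_right _ _ (Ideal.subset_span (by simp))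
            · rcases hg with rfl | rfl | rfl | rfl
              · have h : (X (2:Fin 4) : R) • (X 0 * X 2 : R) = (X 2 * X 2) * X 0 := by
                  rw [smul_eq_mul]; ring
                rw [h]
                exact Ideal.mul_mem_left _ _ (Ideal.subset_span (by simp))
              · have h : (X (2:Fin 4) : R) • (X 0 * X 3 : R) = (X 2 * X 3) * X 0 := by
                  rw [smul_eq_mul]; ring
                rw [h]
                exact Ideal.mul_mem_left _ _ (Ideal.subset_span (by simp))
              · have h : (X (2:Fin 4) : R) • (X 1 * X 2 : R) = X 2 * (X 1 * X 2) := by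
                  rw [smul_eq_mul]
                rw [h]
                exact Ideal.mul_mem_left _ _ (Ideal.subset_span (by simp))
              · have h : (X (2:Fin 4) : R) • (X 1 * X 3 : R) = X 3 * (X 1 * X 2) := by
                  rw [smul_eq_mul]; ring
                rw [h]
                exact Ideal.mul_mem_left _ _ (Ideal.subset_span (by simp))
        | zero => rw [smul_zero]; exact I.zero_mem
        | add p q _ _ hp hq => rw [smul_add]; exact I.add_mem hp hq
        | smul c p _ hp => rw [smul_comm]; exact I.smul_mem c hp
      intro z hz
      exact le_iSup (fun n => Submodule.colon I ((G ^ n : Ideal R) : Set R)) 1 (key z hz)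
  refine ⟨hmain, ?_⟩
  rw [hmain]
  intro heq
  have hy : (X 2 : R) ∈ I := heq ▸ Ideal.subset_span (by simp)
  have hIk : I ≤ RingHom.ker (psiAux k).toRingHom := by
    rw [hI, Ideal.span_le]
    rintro f (rfl | rfl) <;> rw [SetLike.mem_coe, RingHom.mem_ker]
    · show psiAux k (X 0) = 0
      rw [psiAux_X, if_pos rfl]
    · show psiAux k (X 1 * X 2) = 0
      rw [map_mul, psiAux_X, if_neg (by decide), if_pos rfl, zero_mul]
  have h0 : psiAux k (X 2 : R) = 0 := hIk hy
  rw [psiAux_X, if_neg (by decide), if_neg (by decide)] at h0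
  exact X_ne_zero _ h0

end Aux

open MvPolynomial in
theorem stmt8 {k : Type*} [Field k] :
    letI R := MvPolynomial (Fin 4) k
    letI x₀ : R := X 0; letI x₁ : R := X 1; letI y₀ : R := X 2; letI y₁ : R := X 3
    letI I : Ideal R := Ideal.span {x₀, x₁ * y₀}
    letI G : Ideal R := Ideal.span {x₀ * y₀, x₀ * y₁, x₁ * y₀, x₁ * y₁}
    I.satPow G = Ideal.span {x₀, y₀} ∧ I.satPow G ≠ I :=
  stmt8aux
end

section
/- Let k'/k be a finite Galois extension of fields with group Γ, let V be a k'-vector space with a semilinear Γ-action, let W ⊆ V be a Γ-invariant k'-subspace, and let f ∈ V with f ∉ W. Then the k'-span of the Γ-orbit of f contains a Γ-invariant element not lying in W. -/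
theorem stmt14 {k k' : Type*} [Field k] [Field k'] [Algebra k k']
    [FiniteDimensional k k'] [IsGalois k k']
    {V : Type*} [AddCommGroup V] [Module k' V]
    (act : (k' ≃ₐ[k] k') → V →+ V)
    (hone : ∀ v, act 1 v = v)
    (hmul : ∀ g h v, act (g * h) v = act g (act h v))
    (hsemi : ∀ (g : k' ≃ₐ[k] k') (a : k') (v : V), act g (a • v) = g a • act g v)
    (W : Submodule k' V) (hW : ∀ g, ∀ w ∈ W, act g w ∈ W)
    (f : V) (hf : f ∉ W) :
    ∃ v ∈ Submodule.span k' (Set.range fun g => act g f),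
      (∀ g, act g v = v) ∧ v ∉ W := by
  classical
  set T : k' → V := fun a => ∑ g : (k' ≃ₐ[k] k'), (g a) • act g f with hT
  have hTspan : ∀ a, T a ∈ Submodule.span k' (Set.range fun g => act g f) := by
    intro a
    refine Submodule.sum_mem _ fun g _ => Submodule.smul_mem _ _ ?_
    exact Submodule.subset_span ⟨g, rfl⟩
  have hTfix : ∀ a (h : (k' ≃ₐ[k] k')), act h (T a) = T a := by
    intro a h
    rw [hT]
    simp only [map_sum, hsemi]
    rw [← Fintype.sum_equiv (Equiv.mulLeft h) _ (fun g => (g a) • act g f)]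
    intro g
    simp only [Equiv.coe_mulLeft]
    rw [hmul, AlgEquiv.mul_apply]
  by_contra hcon
  push_neg at hcon
  have hTW : ∀ a, T a ∈ W := fun a => hcon (T a) (hTspan a) (hTfix a)
  -- pass to quotient
  set q : V →ₗ[k'] V ⧸ W := W.mkQ
  have hqf : q f ≠ 0 := by
    simpa [q, Submodule.Quotient.mk_eq_zero] using hf
  have : ¬ ∀ φ : Module.Dual k' (V ⧸ W), φ (q f) = 0 := by
    rw [Module.forall_dual_apply_eq_zero_iff k']
    exact hqf
  obtain ⟨φ, hφ⟩ := not_forall.1 this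
  have hrel : ∀ a : k', ∑ g : (k' ≃ₐ[k] k'), (g a) * φ (q (act g f)) = 0 := by
    intro a
    have : φ (q (T a)) = 0 := by
      rw [show q (T a) = 0 from (Submodule.Quotient.mk_eq_zero W).2 (hTW a)]
      exact map_zero φ
    rw [hT] at this
    simpa [map_sum, map_smul, smul_eq_mul] using this
  -- linear independence of characters
  have hli : LinearIndependent k' (fun g : (k' ≃ₐ[k] k') => ((g : k' →* k') : k' → k')) := by
    refine (linearIndependent_monoidHom k' k').comp (fun g : (k' ≃ₐ[k] k') => (g : k' →* k')) ?_
    intro g h hgh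
    ext a
    exact congrFun (congrArg (fun m : k' →* k' => (m : k' → k')) hgh) a
  have := Fintype.linearIndependent_iff.1 hli (fun g => φ (q (act g f))) ?_ 1
  · rw [hone f] at this
    exact hφ this
  · funext a
    simpa [mul_comm] using hrel a
end

section
/- Let R be a commutative ring, I and G ideals with G finitely generated by g₁, ..., g_m. Then f ∈ (I : G^∞) if and only if the image of f in the localization R[g_i^{-1}] lies in the extension I·R[g_i^{-1}] for every i = 1, ..., m. -/
lemma away_mem_map_iff {R : Type*} [CommRing R] (I : Ideal R) (r f : R) :
    algebraMap R (Localization.Away r) f ∈ I.map (algebraMap R (Localization.Away r)) ↔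
      ∃ n : ℕ, r ^ n * f ∈ I := by
  rw [IsLocalization.mem_map_algebraMap_iff (Submonoid.powers r)]
  constructor
  · rintro ⟨⟨a, s⟩, h⟩
    rw [← map_mul, IsLocalization.eq_iff_exists (Submonoid.powers r)] at h
    obtain ⟨c, hc⟩ := h
    obtain ⟨n, hn⟩ := c.2
    obtain ⟨k, hk⟩ := s.2
    refine ⟨n + k, ?_⟩
    simp only at hn hk
    have : r ^ n * (f * r ^ k) ∈ I := by
      rw [hn, hk]; simp only at hc; exact hc ▸ I.mul_mem_left _ a.2
    rw [pow_add]; rw [mul_assoc]; rwa [mul_comm (r^k) f]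
  · rintro ⟨n, hn⟩
    exact ⟨⟨⟨r ^ n * f, hn⟩, ⟨r ^ n, n, rfl⟩⟩, by rw [← map_mul, mul_comm]⟩

theorem stmt16' {R : Type*} [CommRing R] (I G : Ideal R) (m : ℕ) (g : Fin m → R)
    (hG : G = Ideal.span (Set.range g)) (f : R) :
    f ∈ (⨆ n : ℕ, Submodule.colon I ((G ^ n : Ideal R) : Set R)) ↔
      ∀ i, algebraMap R (Localization.Away (g i)) f ∈
        I.map (algebraMap R (Localization.Away (g i))) := by
  have hmono : Monotone fun n : ℕ => Submodule.colon I ((G ^ n : Ideal R) : Set R) := fun a b h =>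
    Submodule.colon_mono le_rfl (SetLike.coe_subset_coe.mpr (Ideal.pow_le_pow_right h))
  rw [Submodule.mem_iSup_of_directed _ hmono.directed_le]
  constructor
  · rintro ⟨n, hn⟩ i
    rw [away_mem_map_iff]
    refine ⟨n, ?_⟩
    have hg : g i ∈ G := hG ▸ Ideal.subset_span ⟨i, rfl⟩
    simpa [smul_eq_mul, mul_comm] using Submodule.mem_colon.mp hn (g i ^ n) (Ideal.pow_mem_pow hg n)
  · intro h
    choose n hn using fun i => (away_mem_map_iff I (g i) f).mp (h i)
    set J : Ideal R := Ideal.span (Set.range fun i => g i ^ (n i)) with hJ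
    have hrad : G ≤ J.radical := by
      rw [hG, Ideal.span_le]
      rintro _ ⟨i, rfl⟩
      exact ⟨n i, Ideal.subset_span ⟨i, rfl⟩⟩
    have hfg : G.FG := hG ▸ Submodule.fg_span (Set.finite_range g)
    obtain ⟨k, hk⟩ := Ideal.exists_pow_le_of_le_radical_of_fg hrad hfg
    refine ⟨k, Submodule.mem_colon.mpr fun p hp => ?_⟩
    have hJc : J ≤ I.colon (Ideal.span {f}) := by
      rw [hJ, Ideal.span_le]
      rintro _ ⟨i, rfl⟩
      exact Submodule.mem_colon_span_singleton.mpr (by simpa [smul_eq_mul] using hn i)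
    have := Submodule.mem_colon_span_singleton.mp (hJc (hk hp))
    simpa [smul_eq_mul, mul_comm] using this

theorem stmt16 {R : Type*} [CommRing R] (I G : Ideal R) (m : ℕ) (g : Fin m → R)
    (hG : G = Ideal.span (Set.range g)) (f : R) :
    f ∈ I.satPow G ↔
      ∀ i, algebraMap R (Localization.Away (g i)) f ∈
        I.map (algebraMap R (Localization.Away (g i))) := by
  rw [Ideal.satPow]
  exact stmt16' I G m g hG f
end
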